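/- Let a ∈ ℝⁿ with g(a) = 0, and assume on the closed ball B(a, m') = {y : ‖y − a‖ ≤ m'} that ∇_min ≤ ‖∇g(y)‖ and ∇²g(y) ⪯ λ^Δ_max·I, with ∇_min > 0, λ^Δ_max > 0. Set φ_g = ∇_min/λ^Δ_max and m_φ = (min{φ_g²/2, √(φ_g⁴/4 + (m')²φ_g²) − φ_g²/2})^{1/2}. Let μ ∈ ℝⁿ be a unit vector with ⟨μ, ∇g(a)⟩ = 0 and let 0 ≤ m ≤ m_φ. Then the point a + mμ − (m²/φ_g)·∇g(a)/‖∇g(a)‖ belongs to 𝒜, and consequently the metric projection proj_𝒜(a + mμ) of a + mμ onto 𝒜 satisfies ‖proj_𝒜(a + mμ) − (a + mμ)‖ ≤ m²/φ_g. -/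

import Mathlib

open RealInnerProductSpace

/-!
Walking a distance `m` along the tangent direction `μ` and then `m² / φ_g` back along the inward
normal `-∇g(a) / ‖∇g(a)‖` gives a step `w` with `‖w‖² = m² + m⁴ / φ_g²`, which the choice of
`m_φ` keeps inside `B(a, m')`. There the Hessian bound yields the second-order estimate
`g(a + w) ≤ g(a) + ⟪∇g(a), w⟫ + λ ‖w‖² / 2`; the linear term is at most `-λ m²` and the quadratic
one at most `λ m²` because `m² ≤ φ_g²`, so `g(a + w) ≤ 0`. A nearest point of `𝒜` is then no
farther from `a + mμ` than `a + w`, which lies at distance `m² / φ_g`.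
-/

open Set

lemma le_add_deriv_add_half_of_deriv2_le {f f' f'' : ℝ → ℝ} {M : ℝ}
    (hf : ∀ t, HasDerivAt f (f' t) t) (hf' : ∀ t, HasDerivAt f' (f'' t) t)
    (hM : ∀ t ∈ Icc (0 : ℝ) 1, f'' t ≤ M) :
    f 1 ≤ f 0 + f' 0 + M / 2 := by
  set h : ℝ → ℝ := fun t ↦ M * t ^ 2 / 2 - f t
  have hh : ∀ t, HasDerivAt h (M * t - f' t) t := fun t ↦
    (((hasDerivAt_pow 2 t).const_mul M).div_const 2 |>.sub (hf t)).congr_deriv (by ring)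
  have hh' : ∀ t, HasDerivAt (fun t ↦ M * t - f' t) (M - f'' t) t := fun t ↦
    (((hasDerivAt_id t).const_mul M).sub (hf' t)).congr_deriv (by simp)
  have hconvex : ConvexOn ℝ (Icc 0 1) h := by
    refine convexOn_of_hasDerivWithinAt2_nonneg (convex_Icc 0 1)
      (fun t _ ↦ (hh t).continuousAt.continuousWithinAt)
      (fun t _ ↦ (hh t).hasDerivWithinAt) (fun t _ ↦ (hh' t).hasDerivWithinAt) ?_
    rw [interior_Icc]
    exact fun t ht ↦ sub_nonneg.2 (hM t (Ioo_subset_Icc_self ht))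
  have := hconvex.le_slope_of_hasDerivAt (by simp) (by simp) one_pos (hh 0)
  simp only [slope_def_field, h] at this
  linarith

section Descent

variable {E : Type*} [NormedAddCommGroup E] [InnerProductSpace ℝ E] [CompleteSpace E]

lemma ContDiff.differentiable_gradient {g : E → ℝ} (hg : ContDiff ℝ 2 g) :
    Differentiable ℝ (gradient g) :=
  (InnerProductSpace.toDual ℝ E).symm.differentiable.comp
    ((hg.fderiv_right (m := 1) le_rfl).differentiable one_ne_zero)

/-- The descent lemma of `L`-smooth optimisation, localised to a ball. -/
lemma le_add_inner_gradient_add_of_hessian_le {g : E → ℝ} (hg : Differentiable ℝ g)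
    (hg' : Differentiable ℝ (gradient g)) {a w : E} {r L : ℝ} (hw : ‖w‖ ≤ r)
    (hL : ∀ y, ‖y - a‖ ≤ r → ∀ v, ⟪fderiv ℝ (gradient g) y v, v⟫ ≤ L * ‖v‖ ^ 2) :
    g (a + w) ≤ g a + ⟪gradient g a, w⟫ + L * ‖w‖ ^ 2 / 2 := by
  have hline : ∀ t : ℝ, HasDerivAt (fun t : ℝ ↦ a + t • w) w t := fun t ↦ by
    simpa using ((hasDerivAt_id t).smul_const w).const_add a
  have hd1 : ∀ t : ℝ, HasDerivAt (fun t ↦ g (a + t • w)) ⟪gradient g (a + t • w), w⟫ t :=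
    fun t ↦ (hg _).hasGradientAt.fderiv_apply (𝕜 := ℝ) ▸
      (hg _).hasFDerivAt.comp_hasDerivAt t (hline t)
  have hd2 : ∀ t : ℝ, HasDerivAt (fun t ↦ ⟪gradient g (a + t • w), w⟫)
      ⟪fderiv ℝ (gradient g) (a + t • w) w, w⟫ t := fun t ↦ by
    simpa using ((hg' _).hasFDerivAt.comp_hasDerivAt t (hline t)).inner ℝ (hasDerivAt_const t w)
  have hbound : ∀ t ∈ Icc (0 : ℝ) 1, ⟪fderiv ℝ (gradient g) (a + t • w) w, w⟫ ≤ L * ‖w‖ ^ 2 := by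
    refine fun t ht ↦ hL _ ?_ w
    rw [add_sub_cancel_left, norm_smul, Real.norm_of_nonneg ht.1]
    exact (mul_le_of_le_one_left (norm_nonneg w) ht.2).trans hw
  simpa using le_add_deriv_add_half_of_deriv2_le hd1 hd2 hbound

end Descent

/-- `√(φ⁴/4 + r²φ²) - φ²/2` is the positive root of `s² + φ² s = r² φ²`. -/
lemma add_div_sq_le_sq_of_le_sqrt_sub {φ r s : ℝ} (hφ : φ ≠ 0) (hs : 0 ≤ s)
    (h : s ≤ √(φ ^ 4 / 4 + r ^ 2 * φ ^ 2) - φ ^ 2 / 2) :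
    s + (s / φ) ^ 2 ≤ r ^ 2 := by
  have hsq : (s + φ ^ 2 / 2) ^ 2 ≤ φ ^ 4 / 4 + r ^ 2 * φ ^ 2 :=
    Real.le_sqrt (by positivity) (by positivity) |>.1 (by linarith)
  have : r ^ 2 - (s + (s / φ) ^ 2) =
      (φ ^ 4 / 4 + r ^ 2 * φ ^ 2 - (s + φ ^ 2 / 2) ^ 2) / φ ^ 2 := by
    field_simp
    ring
  exact sub_nonneg.1 (this ▸ div_nonneg (by linarith) (sq_nonneg φ))

lemma div_sq_le_of_le_sq_div_two {φ s : ℝ} (hs : 0 ≤ s) (h : s ≤ φ ^ 2 / 2) :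
    (s / φ) ^ 2 ≤ s := by
  rcases eq_or_ne φ 0 with rfl | hφ
  · simpa using hs
  rw [div_pow, div_le_iff₀ (by positivity), sq s]
  exact mul_le_mul_of_nonneg_left (by linarith [sq_nonneg φ]) hs

section TangentStep

variable {E : Type*} [NormedAddCommGroup E] [InnerProductSpace ℝ E] {μ v : E}

lemma norm_inv_norm_smul_self (hv : v ≠ 0) : ‖‖v‖⁻¹ • v‖ = 1 := by
  simp [norm_smul, hv]

lemma norm_sq_smul_sub_smul_normalize (hμ : ‖μ‖ = 1) (hv : v ≠ 0) (hμv : ⟪μ, v⟫ = 0)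
    (m c : ℝ) : ‖m • μ - c • (‖v‖⁻¹ • v)‖ ^ 2 = m ^ 2 + c ^ 2 := by
  have horth : ⟪m • μ, c • (‖v‖⁻¹ • v)⟫ = 0 := by
    simp only [real_inner_smul_left, real_inner_smul_right, hμv, mul_zero]
  rw [sq, norm_sub_sq_eq_norm_sq_add_norm_sq_real horth, norm_smul, norm_smul, hμ,
    norm_inv_norm_smul_self hv, mul_one, mul_one, Real.norm_eq_abs, Real.norm_eq_abs,
    abs_mul_abs_self, abs_mul_abs_self, sq, sq]

lemma inner_smul_sub_smul_normalize (hμv : ⟪μ, v⟫ = 0) (m c : ℝ) :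
    ⟪v, m • μ - c • (‖v‖⁻¹ • v)⟫ = -(c * ‖v‖) := by
  rw [inner_sub_right, real_inner_smul_right, real_inner_comm, hμv, real_inner_smul_right,
    real_inner_smul_right, real_inner_self_eq_norm_sq]
  field_simp
  ring

end TangentStep

theorem tangential_projection_bound_general {n : ℕ}
    (g : EuclideanSpace ℝ (Fin n) → ℝ) (hg : ContDiff ℝ 3 g)
    (a : EuclideanSpace ℝ (Fin n)) (ha : g a = 0)
    (m' gradmin lamΔmax : ℝ) (hm' : 0 < m') (hgradmin : 0 < gradmin)
    (hlamΔmax : 0 < lamΔmax)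
    (hgradbnd : ∀ y : EuclideanSpace ℝ (Fin n), ‖y - a‖ ≤ m' →
      gradmin ≤ ‖gradient g y‖)
    (hHess : ∀ y : EuclideanSpace ℝ (Fin n), ‖y - a‖ ≤ m' →
      ∀ v : EuclideanSpace ℝ (Fin n),
        ⟪fderiv ℝ (gradient g) y v, v⟫ ≤ lamΔmax * ‖v‖ ^ 2)
    (φg mφ : ℝ) (hφg : φg = gradmin / lamΔmax)
    (hmφ : mφ ^ 2 = min (φg ^ 2 / 2)
      (Real.sqrt (φg ^ 4 / 4 + m' ^ 2 * φg ^ 2) - φg ^ 2 / 2))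
    (μ : EuclideanSpace ℝ (Fin n)) (hμ : ‖μ‖ = 1) (hμperp : ⟪μ, gradient g a⟫ = 0)
    (m : ℝ) (hm0 : 0 ≤ m) (hm : m ≤ mφ) :
    g (a + m • μ - (m ^ 2 / φg) • (‖gradient g a‖⁻¹ • gradient g a)) ≤ 0 ∧
    ∀ p : EuclideanSpace ℝ (Fin n), g p ≤ 0 →
      (∀ q : EuclideanSpace ℝ (Fin n), g q ≤ 0 → dist (a + m • μ) p ≤ dist (a + m • μ) q) →
      ‖p - (a + m • μ)‖ ≤ m ^ 2 / φg := by
  have hφ : 0 < φg := hφg ▸ div_pos hgradmin hlamΔmax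
  have hG : gradmin ≤ ‖gradient g a‖ := hgradbnd a (by simpa using hm'.le)
  have hne : gradient g a ≠ 0 := norm_pos_iff.1 (hgradmin.trans_le hG)
  obtain ⟨hhalf, hroot⟩ := le_min_iff.1 (hmφ ▸ pow_le_pow_left₀ hm0 hm 2)
  set c := m ^ 2 / φg
  set w := m • μ - c • (‖gradient g a‖⁻¹ • gradient g a)
  have hw2 : ‖w‖ ^ 2 = m ^ 2 + c ^ 2 := norm_sq_smul_sub_smul_normalize hμ hne hμperp m c
  have hwr : ‖w‖ ≤ m' := pow_le_pow_iff_left₀ (norm_nonneg w) hm'.le two_ne_zero |>.1 <|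
    hw2 ▸ add_div_sq_le_sq_of_le_sqrt_sub hφ.ne' (by positivity) hroot
  have hc2 : c ^ 2 ≤ m ^ 2 := div_sq_le_of_le_sq_div_two (by positivity) hhalf
  have hlinear : lamΔmax * m ^ 2 ≤ c * ‖gradient g a‖ := by
    calc lamΔmax * m ^ 2 = c * gradmin := by simp only [c, hφg]; field_simp
      _ ≤ c * ‖gradient g a‖ := by gcongr
  have hmem : g (a + w) ≤ 0 := by
    have hdesc := le_add_inner_gradient_add_of_hessian_le (hg.differentiable (by norm_num))
      (hg.of_le (by norm_num)).differentiable_gradient hwr hHess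
    rw [ha, inner_smul_sub_smul_normalize hμperp, hw2] at hdesc
    nlinarith
  rw [← add_sub_assoc] at hmem
  refine ⟨hmem, fun p _ hmin ↦ ?_⟩
  calc ‖p - (a + m • μ)‖ = dist (a + m • μ) p := by rw [dist_comm, dist_eq_norm]
    _ ≤ dist (a + m • μ) (a + m • μ - c • (‖gradient g a‖⁻¹ • gradient g a)) := hmin _ hmem
    _ = c := by rw [dist_eq_norm, sub_sub_cancel, norm_smul, norm_inv_norm_smul_self hne, mul_one,
      Real.norm_of_nonneg (by positivity)]

/-- tangential step and projection. Let `a` be a boundary point of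
`𝒜 = {g ≤ 0}`, with `‖∇g‖ ≥ ∇min` and `∇²g ⪯ λΔmax·I` on the ball `B(a, m')`. Set
`φ_g = ∇min/λΔmax` and `m_φ` as in the paper. For a unit vector `μ` tangent at `a`
(`⟪μ, ∇g(a)⟫ = 0`) and `0 ≤ m ≤ m_φ`, the point `a + mμ − (m²/φ_g)·∇g(a)/‖∇g(a)‖` lies in
`𝒜`, and the metric projection of `a + mμ` onto `𝒜` is within distance `m²/φ_g` of
`a + mμ`. -/
theorem tangential_projection_bound {n : ℕ}
    (g : EuclideanSpace ℝ (Fin n) → ℝ) (hg : ContDiff ℝ 3 g)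
    (κ : ℝ) (hκ : 0 < κ) (hsc : StrongConvexOn Set.univ κ g)
    (hcompact : IsCompact {x : EuclideanSpace ℝ (Fin n) | g x ≤ 0})
    (a : EuclideanSpace ℝ (Fin n)) (ha : g a = 0)
    (m' gradmin lamΔmax : ℝ) (hm' : 0 < m') (hgradmin : 0 < gradmin)
    (hlamΔmax : 0 < lamΔmax)
    (hgradbnd : ∀ y : EuclideanSpace ℝ (Fin n), ‖y - a‖ ≤ m' →
      gradmin ≤ ‖gradient g y‖)
    (hHess : ∀ y : EuclideanSpace ℝ (Fin n), ‖y - a‖ ≤ m' →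
      ∀ v : EuclideanSpace ℝ (Fin n),
        ⟪fderiv ℝ (gradient g) y v, v⟫ ≤ lamΔmax * ‖v‖ ^ 2)
    (φg mφ : ℝ) (hφg : φg = gradmin / lamΔmax) (hmφ0 : 0 ≤ mφ)
    (hmφ : mφ ^ 2 = min (φg ^ 2 / 2)
      (Real.sqrt (φg ^ 4 / 4 + m' ^ 2 * φg ^ 2) - φg ^ 2 / 2))
    (μ : EuclideanSpace ℝ (Fin n)) (hμ : ‖μ‖ = 1) (hμperp : ⟪μ, gradient g a⟫ = 0)
    (m : ℝ) (hm0 : 0 ≤ m) (hm : m ≤ mφ) :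
    g (a + m • μ - (m ^ 2 / φg) • (‖gradient g a‖⁻¹ • gradient g a)) ≤ 0 ∧
    ∀ p : EuclideanSpace ℝ (Fin n), g p ≤ 0 →
      (∀ q : EuclideanSpace ℝ (Fin n), g q ≤ 0 → dist (a + m • μ) p ≤ dist (a + m • μ) q) →
      ‖p - (a + m • μ)‖ ≤ m ^ 2 / φg :=
  tangential_projection_bound_general g hg a ha m' gradmin lamΔmax hm' hgradmin hlamΔmax hgradbnd
    hHess φg mφ hφg hmφ μ hμ hμperp m hm0 hm
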